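/- Let Q be a quiver with dimension vector α ≡ 1, and let c₁ and c₂ be two primitive cycles in Q that intersect trivially, i.e., the multiset sum of their arrows admits a unique partition into primitive cycles. Then c₁ and c₂ are either vertex-disjoint, or their common vertices and arrows form a single directed path. -/

import Mathlib

/-- A quiver (finite directed multigraph): a finite set of vertices `V`,
a finite set of arrows `A`, and source/target maps `s`, `t`. -/
structure Quiv where
  V : Type
  A : Type
  [fintV : Fintype V]
  [fintA : Fintype A]
  [decV : DecidableEq V]
  [decA : DecidableEq A]
  s : A → V
  t : A → V

attribute [instance] Quiv.fintV Quiv.fintA Quiv.decV Quiv.decA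

namespace Quiv

variable (Q : Quiv)

/-- Cyclic access to the entries of a nonempty list. -/
def cyc (l : List Q.A) (hl : l ≠ []) (i : ℕ) : Q.A :=
  l.get ⟨i % l.length, Nat.mod_lt _ (List.length_pos_iff.mpr hl)⟩

/-- `l` is a (nonempty) directed cycle: consecutive arrows compose, cyclically. -/
def IsCycleList (l : List Q.A) : Prop :=
  ∃ hl : l ≠ [], ∀ i : ℕ, Q.t (Q.cyc l hl i) = Q.s (Q.cyc l hl (i + 1))

/-- A primitive (simple) cycle: a directed cycle visiting no vertex more than once. -/
def IsPrimCycle (l : List Q.A) : Prop :=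
  Q.IsCycleList l ∧ (l.map Q.s).Nodup

/-- The set of primitive cycles of `Q`, each recorded by its (finite) set of arrows.
A primitive cycle is determined, up to rotation, by its set of arrows. -/
def primCycles : Set (Finset Q.A) :=
  { S | ∃ l : List Q.A, Q.IsPrimCycle l ∧ l.toFinset = S }

/-- The number of primitive cycles of `Q`. -/
noncomputable def numPrimCycles : ℕ := Q.primCycles.ncard

/-- One-step reachability. -/
def Step (u v : Q.V) : Prop := ∃ a : Q.A, Q.s a = u ∧ Q.t a = v

/-- `Q` is strongly connected: every vertex is reachable from every other
by a directed path. -/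
def StronglyConnected : Prop := ∀ u v : Q.V, Relation.ReflTransGen Q.Step u v

/-- `Q` has no loops. -/
def NoLoops : Prop := ∀ a : Q.A, Q.s a ≠ Q.t a

/-- In-degree of a vertex (arrows counted with multiplicity). -/
def inDeg (v : Q.V) : ℕ := (Finset.univ.filter fun a => Q.t a = v).card

/-- Out-degree of a vertex (arrows counted with multiplicity). -/
def outDeg (v : Q.V) : ℕ := (Finset.univ.filter fun a => Q.s a = v).card

/-- `F(Q) = |C| + |V| - |A| - 1`, the codimension of the associated toric variety. -/
noncomputable def F : ℤ :=
  (Q.numPrimCycles : ℤ) + (Fintype.card Q.V : ℤ) - (Fintype.card Q.A : ℤ) - 1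


/-- A multiset of arrows is Eulerian if at every vertex the number of arrows of `U`
entering the vertex (with multiplicity) equals the number leaving it. -/
def Eulerian (U : Multiset Q.A) : Prop :=
  ∀ v : Q.V, (U.filter fun a => Q.t a = v).card = (U.filter fun a => Q.s a = v).card

/-- `P` is a partition of the arrow multiset `U` into primitive cycles: a multiset of
arrow sets of primitive cycles whose multiset sum is `U`. -/
def IsCyclePartition (U : Multiset Q.A) (P : Multiset (Finset Q.A)) : Prop :=
  (∀ c ∈ P, c ∈ Q.primCycles) ∧ (P.map Finset.val).sum = U

/-- The set of vertices met by a set of arrows. -/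
def verts (S : Finset Q.A) : Finset Q.V := S.image Q.s ∪ S.image Q.t

/-- The list of vertices visited by a list of arrows (for a composable list:
the source of the first arrow followed by the targets of all arrows). -/
def pathVerts (p : List Q.A) : List Q.V :=
  match p with
  | [] => []
  | a :: _ => Q.s a :: p.map Q.t

/-- `p` is a simple directed path: consecutive arrows compose and it visits no
vertex twice. -/
def IsDirPath (p : List Q.A) : Prop :=
  p.Chain' (fun a b => Q.t a = Q.s b) ∧ (Q.pathVerts p).Nodup

/-- `p` is a (nonempty) simple directed path from `u` to `w`. -/
def IsPathFromTo (p : List Q.A) (u w : Q.V) : Prop :=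
  Q.IsDirPath p ∧ p ≠ [] ∧ (Q.pathVerts p).head? = some u ∧ (Q.pathVerts p).getLast? = some w

/-
Two primitive cycles sharing two distinct vertices `u` and `v` can be cut there into arcs
`c₁ = (u → v) + (v → u)` and `c₂ = (v → u) + (u → v)`. Gluing the arcs crosswise gives two
closed walks that together use exactly the arrows of `c₁ + c₂`, and every closed walk splits
into primitive cycles at repeated vertices. This yields a partition of `c₁ + c₂` in which `c₁`
lies inside one of the two closed walks; but each of them contains only one arc of `c₁`, and
the missing arc cannot be supplied by the arrow-disjoint cycle `c₂`. Hence arrow-disjoint,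
trivially intersecting cycles share at most one vertex.
-/

theorem _root_.List.exists_eq_append_cons_append_cons_of_not_nodup_map {α β : Type*}
    {f : α → β} {l : List α} (h : ¬(l.map f).Nodup) :
    ∃ a b c x y, l = a ++ x :: (b ++ y :: c) ∧ f x = f y := by
  induction l with
  | nil => simp at h
  | cons z l ih =>
    rw [List.map_cons, List.nodup_cons, not_and_or, not_not] at h
    rcases h with h | h
    · obtain ⟨y, hy, hzy⟩ := List.mem_map.mp h
      obtain ⟨b, c, rfl⟩ := List.append_of_mem hy
      exact ⟨[], b, c, z, y, rfl, hzy.symm⟩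
    · obtain ⟨a, b, c, x, y, rfl, hxy⟩ := ih h
      exact ⟨z :: a, b, c, x, y, rfl, hxy⟩

def IsWalk : List Q.A → Q.V → Q.V → Prop
  | [], u, w => u = w
  | a :: p, u, w => Q.s a = u ∧ IsWalk p (Q.t a) w

variable {Q}

@[simp]
theorem isWalk_nil {u w : Q.V} : Q.IsWalk [] u w ↔ u = w := Iff.rfl

@[simp]
theorem isWalk_cons {a : Q.A} {p : List Q.A} {u w : Q.V} :
    Q.IsWalk (a :: p) u w ↔ Q.s a = u ∧ Q.IsWalk p (Q.t a) w := Iff.rfl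

theorem isWalk_append {p q : List Q.A} {u w : Q.V} :
    Q.IsWalk (p ++ q) u w ↔ ∃ v, Q.IsWalk p u v ∧ Q.IsWalk q v w := by
  induction p generalizing u with
  | nil => simp
  | cons a p ih => simp [ih, and_assoc, exists_and_left]

theorem isWalk_iff_cons_map_t {l : List Q.A} {u w : Q.V} :
    Q.IsWalk l u w ↔ u :: l.map Q.t = l.map Q.s ++ [w] := by
  induction l generalizing u with
  | nil => simp
  | cons a p ih => simp [ih, eq_comm]

theorem IsWalk.exists_eq_append {l : List Q.A} {u v w : Q.V} (h : Q.IsWalk l u w)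
    (hv : v ∈ l.map Q.s) : ∃ p q, l = p ++ q ∧ Q.IsWalk p u v ∧ Q.IsWalk q v w := by
  obtain ⟨x, hx, rfl⟩ := List.mem_map.mp hv
  obtain ⟨p, q, rfl⟩ := List.append_of_mem hx
  obtain ⟨v, hp, hq⟩ := isWalk_append.mp h
  obtain rfl : Q.s x = v := (isWalk_cons.mp hq).1
  exact ⟨p, x :: q, rfl, hp, hq⟩

theorem IsWalk.exists_perm_append {l : List Q.A} {u v w : Q.V} (h : Q.IsWalk l w w)
    (hu : u ∈ l.map Q.s) (hv : v ∈ l.map Q.s) :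
    ∃ p q, l.Perm (p ++ q) ∧ Q.IsWalk p u v ∧ Q.IsWalk q v u := by
  obtain ⟨p₀, q₀, rfl, hp₀, hq₀⟩ := h.exists_eq_append hu
  have hrotate : Q.IsWalk (q₀ ++ p₀) u u := isWalk_append.mpr ⟨w, hq₀, hp₀⟩
  have hperm : (p₀ ++ q₀).Perm (q₀ ++ p₀) := List.perm_append_comm
  obtain ⟨p, q, hpq, hp, hq⟩ := hrotate.exists_eq_append ((hperm.map Q.s).subset hv)
  exact ⟨p, q, hpq ▸ hperm, hp, hq⟩

theorem IsWalk.mem_map_s_of_mem_map_t {l : List Q.A} {u v : Q.V} (h : Q.IsWalk l u u)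
    (hv : v ∈ l.map Q.t) : v ∈ l.map Q.s := by
  rcases l with _ | ⟨a, p⟩
  · simp at hv
  · obtain ⟨rfl, -⟩ := isWalk_cons.mp h
    have hmem := isWalk_iff_cons_map_t.mp h ▸ List.mem_cons_of_mem (Q.s a) hv
    simp only [List.map_cons, List.cons_append, List.mem_cons, List.mem_append] at hmem ⊢
    tauto

theorem IsWalk.verts_toFinset {l : List Q.A} {u : Q.V} (h : Q.IsWalk l u u) :
    Q.verts l.toFinset = (l.map Q.s).toFinset := by
  ext v
  simpa [verts] using fun a ha hav =>
    List.mem_map.mp (h.mem_map_s_of_mem_map_t (List.mem_map.mpr ⟨a, ha, hav⟩))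

theorem isCycleList_iff {l : List Q.A} :
    Q.IsCycleList l ↔ l ≠ [] ∧ l.map Q.t = (l.map Q.s).rotate 1 := by
  refine ⟨fun ⟨hl, h⟩ => ⟨hl, ?_⟩, fun ⟨hl, h⟩ => ⟨hl, fun i => ?_⟩⟩
  · refine List.ext_getElem (by simp) fun i hi _ => ?_
    simp only [List.length_map] at hi
    simpa [cyc, List.getElem_rotate, Nat.mod_eq_of_lt hi] using h i
  · have hn : 0 < l.length := List.length_pos_iff.mpr hl
    simpa [cyc, Nat.mod_lt _ hn, Nat.mod_add_mod] using congrArg (·[i % l.length]?) h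

theorem isCycleList_cons_iff {a : Q.A} {p : List Q.A} :
    Q.IsCycleList (a :: p) ↔ Q.IsWalk (a :: p) (Q.s a) (Q.s a) := by
  rw [isCycleList_iff, isWalk_iff_cons_map_t]
  simp [List.rotate_cons_succ, eq_comm]

theorem mem_primCycles_iff_exists_isWalk {c : Finset Q.A} :
    c ∈ Q.primCycles ↔
      ∃ l u, Q.IsWalk l u u ∧ l ≠ [] ∧ (l.map Q.s).Nodup ∧ l.toFinset = c := by
  constructor
  · rintro ⟨_ | ⟨a, p⟩, ⟨hcyc, hnd⟩, rfl⟩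
    · exact absurd rfl hcyc.1
    · exact ⟨a :: p, Q.s a, isCycleList_cons_iff.mp hcyc, List.cons_ne_nil _ _, hnd, rfl⟩
  · rintro ⟨_ | ⟨a, p⟩, u, h, hl, hnd, rfl⟩
    · exact absurd rfl hl
    · obtain rfl : Q.s a = u := (isWalk_cons.mp h).1
      exact ⟨a :: p, ⟨isCycleList_cons_iff.mpr h, hnd⟩, rfl⟩

theorem exists_arcs_of_mem_primCycles {c : Finset Q.A} (hc : c ∈ Q.primCycles) {u v : Q.V}
    (hu : u ∈ Q.verts c) (hv : v ∈ Q.verts c) :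
    ∃ p q, Q.IsWalk p u v ∧ Q.IsWalk q v u ∧ c.val = ↑p + ↑q := by
  obtain ⟨l, w, hw, -, hnd, rfl⟩ := mem_primCycles_iff_exists_isWalk.mp hc
  rw [hw.verts_toFinset, List.mem_toFinset] at hu hv
  obtain ⟨p, q, hperm, hp, hq⟩ := hw.exists_perm_append hu hv
  refine ⟨p, q, hp, hq, ?_⟩
  rw [List.toFinset_val, hnd.of_map.dedup, Multiset.coe_add]
  exact Multiset.coe_eq_coe.mpr hperm

theorem IsCyclePartition.add {U U' : Multiset Q.A} {P P' : Multiset (Finset Q.A)}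
    (h : Q.IsCyclePartition U P) (h' : Q.IsCyclePartition U' P') :
    Q.IsCyclePartition (U + U') (P + P') :=
  ⟨by simpa [or_imp, forall_and] using And.intro h.1 h'.1, by simp [h.2, h'.2]⟩

theorem IsCyclePartition.val_le {U : Multiset Q.A} {P : Multiset (Finset Q.A)}
    (h : Q.IsCyclePartition U P) {c : Finset Q.A} (hc : c ∈ P) : c.val ≤ U :=
  h.2 ▸ Multiset.le_sum_of_mem (Multiset.mem_map_of_mem _ hc)

theorem exists_isCyclePartition {l : List Q.A} {u : Q.V} (h : Q.IsWalk l u u) :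
    ∃ P, Q.IsCyclePartition l P := by
  induction hn : l.length using Nat.strong_induction_on generalizing l u with
  | _ n ih =>
  by_cases hnd : (l.map Q.s).Nodup
  · rcases eq_or_ne l [] with rfl | hl
    · exact ⟨0, by simp [IsCyclePartition]⟩
    · have hc : l.toFinset ∈ Q.primCycles :=
        mem_primCycles_iff_exists_isWalk.mpr ⟨l, u, h, hl, hnd, rfl⟩
      exact ⟨{l.toFinset}, by simpa using hc, by simp [List.toFinset_val, hnd.of_map.dedup]⟩
  · obtain ⟨a, b, c, x, y, rfl, hxy⟩ := List.exists_eq_append_cons_append_cons_of_not_nodup_map hnd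
    have hsplit : Q.IsWalk (x :: b) (Q.s x) (Q.s x) ∧
        Q.IsWalk (y :: c ++ a) (Q.s y) (Q.s y) := by
      simp only [isWalk_append, isWalk_cons, true_and] at h ⊢
      obtain ⟨_, ha, rfl, _, hb, rfl, hc⟩ := h
      exact ⟨hxy ▸ hb, u, hc, hxy ▸ ha⟩
    obtain ⟨P, hP⟩ := ih _ (by simp [← hn]; omega) hsplit.1 rfl
    obtain ⟨P', hP'⟩ := ih _ (by simp [← hn]; omega) hsplit.2 rfl
    refine ⟨P + P', ?_⟩
    convert hP.add hP' using 1
    simpa using List.perm_append_comm.trans (List.Perm.of_eq (by simp))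

variable (Q) in
def IntersectTrivially (c₁ c₂ : Finset Q.A) : Prop :=
  ∀ P : Multiset (Finset Q.A), Q.IsCyclePartition (c₁.val + c₂.val) P → P = {c₁, c₂}

theorem IntersectTrivially.eq_of_mem_verts {c₁ c₂ : Finset Q.A} (h₁ : c₁ ∈ Q.primCycles)
    (h₂ : c₂ ∈ Q.primCycles) (hdisj : Disjoint c₁ c₂) (htriv : Q.IntersectTrivially c₁ c₂)
    {u v : Q.V} (hu₁ : u ∈ Q.verts c₁) (hu₂ : u ∈ Q.verts c₂) (hv₁ : v ∈ Q.verts c₁)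
    (hv₂ : v ∈ Q.verts c₂) : u = v := by
  obtain ⟨p₁, q₁, hp₁, hq₁, hc₁⟩ := exists_arcs_of_mem_primCycles h₁ hu₁ hv₁
  obtain ⟨p₂, q₂, hp₂, hq₂, hc₂⟩ := exists_arcs_of_mem_primCycles h₂ hv₂ hu₂
  obtain ⟨P, hP⟩ := exists_isCyclePartition (isWalk_append.mpr ⟨v, hp₁, hp₂⟩)
  obtain ⟨P', hP'⟩ := exists_isCyclePartition (isWalk_append.mpr ⟨u, hq₁, hq₂⟩)
  have hsum : c₁.val + c₂.val = ↑(p₁ ++ p₂) + ↑(q₁ ++ q₂) := by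
    rw [hc₁, hc₂, ← Multiset.coe_add, ← Multiset.coe_add, add_add_add_comm]
  have hpart : Q.IsCyclePartition (c₁.val + c₂.val) (P + P') := hsum ▸ hP.add hP'
  have hc₁mem : c₁ ∈ P + P' := by
    rw [htriv _ hpart]
    exact Multiset.mem_cons_self _ _
  have hnil : ∀ r : List Q.A, (r : Multiset Q.A) ≤ c₁.val → (r : Multiset Q.A) ≤ c₂.val →
      r = [] := fun r hr₁ hr₂ =>
    (Multiset.coe_eq_zero r).mp (le_bot_iff.mp (Finset.disjoint_val.mpr hdisj hr₁ hr₂))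
  rcases Multiset.mem_add.mp hc₁mem with hmem | hmem
  · have hle := hP.val_le hmem
    rw [hc₁, ← Multiset.coe_add, add_le_add_iff_left] at hle
    obtain rfl := hnil q₁ (hc₁ ▸ le_add_self) (hle.trans (hc₂ ▸ le_self_add))
    exact hq₁.symm
  · have hle := hP'.val_le hmem
    rw [hc₁, ← Multiset.coe_add, add_comm, add_le_add_iff_left] at hle
    obtain rfl := hnil p₁ (hc₁ ▸ le_self_add) (hle.trans (hc₂ ▸ le_add_self))
    exact hp₁

theorem stmt_6_general (Q : Quiv) (c₁ c₂ : Finset Q.A)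
    (h₁ : c₁ ∈ Q.primCycles) (h₂ : c₂ ∈ Q.primCycles)
    (hdisj : Disjoint c₁ c₂)
    (htriv : ∀ P : Multiset (Finset Q.A),
      Q.IsCyclePartition (c₁.val + c₂.val) P → P = {c₁, c₂}) :
    Disjoint (Q.verts c₁) (Q.verts c₂) ∨
    (c₁ ∩ c₂ = ∅ ∧ ∃ v : Q.V, Q.verts c₁ ∩ Q.verts c₂ = {v}) ∨
    (∃ p : List Q.A, p ≠ [] ∧ Q.IsDirPath p ∧ p.toFinset = c₁ ∩ c₂ ∧
      (Q.pathVerts p).toFinset = Q.verts c₁ ∩ Q.verts c₂) := by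
  refine or_iff_not_imp_left.mpr fun hd =>
    Or.inl ⟨Finset.disjoint_iff_inter_eq_empty.mp hdisj, ?_⟩
  obtain ⟨u, hu₁, hu₂⟩ := Finset.not_disjoint_iff.mp hd
  refine ⟨u, Finset.eq_singleton_iff_unique_mem.mpr ⟨Finset.mem_inter.mpr ⟨hu₁, hu₂⟩, ?_⟩⟩
  rintro v hv
  rw [Finset.mem_inter] at hv
  exact (IntersectTrivially.eq_of_mem_verts h₁ h₂ hdisj htriv hu₁ hu₂ hv.1 hv.2).symm

/-- if two (arrow-disjoint, distinct) primitive cycles intersect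
trivially, i.e. the multiset sum of their arrows admits a unique partition into
primitive cycles, then they are vertex-disjoint, or they meet in a single vertex,
or their common vertices and arrows form a single directed path. -/
theorem stmt_6 (Q : Quiv) (c₁ c₂ : Finset Q.A)
    (h₁ : c₁ ∈ Q.primCycles) (h₂ : c₂ ∈ Q.primCycles)
    (hne : c₁ ≠ c₂) (hdisj : Disjoint c₁ c₂)
    (htriv : ∀ P : Multiset (Finset Q.A),
      Q.IsCyclePartition (c₁.val + c₂.val) P → P = {c₁, c₂}) :
    Disjoint (Q.verts c₁) (Q.verts c₂) ∨
    (c₁ ∩ c₂ = ∅ ∧ ∃ v : Q.V, Q.verts c₁ ∩ Q.verts c₂ = {v}) ∨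
    (∃ p : List Q.A, p ≠ [] ∧ Q.IsDirPath p ∧ p.toFinset = c₁ ∩ c₂ ∧
      (Q.pathVerts p).toFinset = Q.verts c₁ ∩ Q.verts c₂) :=
  stmt_6_general Q c₁ c₂ h₁ h₂ hdisj htriv

end Quiv
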